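/- arXiv:2202.13975 — 4 statements merged into one kernel-verified Lean document; each statement's English description precedes it below -/
import Mathlib

section
/- Let $\alpha\in[0,1]$, $\eta>0$, $a\ge 0$, and integer $d\ge 1$. If $2a(\eta d)^{(\alpha+1)/2} \le 1$, then $\int_{\mathbb{R}^d} \exp\left(-\frac{1}{2\eta}\|x\|^2 - a\|x\|^{\alpha+1}\right) dx \ge \frac{(2\pi\eta)^{d/2}}{2}$. -/
open MeasureTheory Real

lemma rpow_two_eq' (t : ℝ) : t ^ (2:ℝ) = t ^ 2 := by
  rw [show ((2:ℝ) = ((2:ℕ):ℝ)) by norm_num, Real.rpow_natCast]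

lemma int_sq_exp' {b : ℝ} (hb : 0 < b) :
    Integrable (fun t : ℝ => t ^ 2 * Real.exp (-b * t ^ 2)) := by
  have h := integrable_rpow_mul_exp_neg_mul_sq hb (s := 2) (by norm_num)
  simpa [rpow_two_eq'] using h

lemma tangent_rpow {t m p : ℝ} (ht : 0 ≤ t) (hm : 0 < m) (hp0 : 0 ≤ p) (hp1 : p ≤ 1) :
    t ^ p ≤ m ^ p + p * m ^ (p - 1) * (t - m) := by
  have hs : -1 ≤ t / m - 1 := by
    have : 0 ≤ t / m := by positivity
    linarith
  have h := rpow_one_add_le_one_add_mul_self hs hp0 hp1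
  have h2 : (t / m) ^ p ≤ 1 + p * (t / m - 1) := by
    have : 1 + (t / m - 1) = t / m := by ring
    rwa [this] at h
  have key : t ^ p = m ^ p * (t / m) ^ p := by
    rw [← Real.mul_rpow hm.le (by positivity), mul_div_cancel₀ _ hm.ne']
  have hmp : m ^ (p - 1) = m ^ p / m := Real.rpow_sub_one hm.ne' p
  have hmpos : (0:ℝ) < m ^ p := Real.rpow_pos_of_pos hm p
  calc t ^ p = m ^ p * (t / m) ^ p := key
    _ ≤ m ^ p * (1 + p * (t / m - 1)) := by
        exact mul_le_mul_of_nonneg_left h2 hmpos.le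
    _ = m ^ p + p * m ^ (p - 1) * (t - m) := by
        rw [hmp]; field_simp

lemma norm_sq_sum {d : ℕ} (x : EuclideanSpace ℝ (Fin d)) : ‖x‖ ^ 2 = ∑ i, x i ^ 2 := by
  rw [EuclideanSpace.norm_eq, Real.sq_sqrt (by positivity)]
  simp [Real.norm_eq_abs, sq_abs]

noncomputable def gfun (d : ℕ) (b : ℝ) (i j : Fin d) : ℝ → ℝ :=
  fun t => if j = i then t ^ 2 * Real.exp (-b * t ^ 2) else Real.exp (-b * t ^ 2)

lemma gfun_int {d : ℕ} {b : ℝ} (hb : 0 < b) (i j : Fin d) : Integrable (gfun d b i j) := by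
  unfold gfun
  by_cases hji : j = i
  · simp only [hji, if_true]
    exact int_sq_exp' hb
  · simp only [hji, if_false]
    exact integrable_exp_neg_mul_sq hb

lemma moment2 {b : ℝ} (hb : 0 < b) :
    ∫ x : ℝ, x ^ 2 * Real.exp (-b * x ^ 2) = 1 / (2 * b) * Real.sqrt (π / b) := by
  have habs : ∫ x : ℝ, x ^ 2 * Real.exp (-b * x ^ 2)
      = 2 * ∫ x in Set.Ioi (0:ℝ), x ^ 2 * Real.exp (-b * x ^ 2) := by
    rw [← integral_comp_abs (f := fun t => t ^ 2 * Real.exp (-b * t ^ 2))]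
    congr 1; ext x; rw [sq_abs]
  have hsub : ∫ x in Set.Ioi (0:ℝ), (|(2:ℝ)| * x ^ ((2:ℝ) - 1)) •
        ((fun y : ℝ => y ^ ((1:ℝ)/2) * Real.exp (-(b * y))) (x ^ (2:ℝ)))
      = ∫ y in Set.Ioi (0:ℝ), y ^ ((1:ℝ)/2) * Real.exp (-(b * y)) := by
    simpa using integral_comp_rpow_Ioi
      (fun y : ℝ => y ^ ((1:ℝ)/2) * Real.exp (-(b * y))) two_ne_zero
  have heq : ∫ x in Set.Ioi (0:ℝ), (|(2:ℝ)| * x ^ ((2:ℝ) - 1)) •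
        ((fun y : ℝ => y ^ ((1:ℝ)/2) * Real.exp (-(b * y))) (x ^ (2:ℝ)))
      = 2 * ∫ x in Set.Ioi (0:ℝ), x ^ 2 * Real.exp (-b * x ^ 2) := by
    rw [← integral_const_mul]
    refine setIntegral_congr_fun measurableSet_Ioi (fun x hx => ?_)
    have hx0 : (0:ℝ) < x := hx
    have h1 : (x ^ (2:ℝ)) ^ ((1:ℝ)/2) = x := by
      rw [← Real.rpow_mul hx0.le]
      norm_num
    have h2 : x ^ (2:ℝ) = x ^ 2 := by
      rw [show ((2:ℝ) = ((2:ℕ):ℝ)) by norm_num, Real.rpow_natCast]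
    simp only [smul_eq_mul]
    rw [h1, h2]
    have : x ^ ((2:ℝ) - 1) = x := by norm_num
    rw [this, abs_of_pos (by norm_num : (0:ℝ) < 2)]
    ring_nf
  have hgam : ∫ y in Set.Ioi (0:ℝ), y ^ ((1:ℝ)/2) * Real.exp (-(b * y))
      = (1 / b) ^ ((3:ℝ)/2) * Real.Gamma (3/2) := by
    have := integral_rpow_mul_exp_neg_mul_Ioi (a := (3:ℝ)/2) (r := b) (by norm_num) hb
    rw [← this]
    norm_num
  have hG32 : Real.Gamma (3/2) = Real.sqrt π / 2 := by
    have h12 : (3:ℝ)/2 = 1/2 + 1 := by norm_num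
    rw [h12, Real.Gamma_add_one (by norm_num), Real.Gamma_one_half_eq]
    ring
  rw [habs, ← heq, hsub, hgam, hG32]
  rw [show (1:ℝ)/b = b⁻¹ by ring, show (3:ℝ)/2 = 1 + 1/2 by norm_num,
    Real.rpow_add (by positivity), Real.rpow_one,
    ← Real.sqrt_eq_rpow, Real.sqrt_div' π (by positivity), Real.sqrt_inv]
  have hsb : Real.sqrt b ≠ 0 := by positivity
  field_simp

lemma momentd {d : ℕ} (hd : 1 ≤ d) {b : ℝ} (hb : 0 < b) :
    ∫ x : EuclideanSpace ℝ (Fin d), ‖x‖ ^ 2 * Real.exp (-b * ‖x‖ ^ 2)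
      = ((d : ℝ) / (2 * b)) * (π / b) ^ ((d : ℝ) / 2) := by
  classical
  have hgint : ∀ i j : Fin d, Integrable (gfun d b i j) := fun i j => gfun_int hb i j
  have htrans : ∫ x : EuclideanSpace ℝ (Fin d), ‖x‖ ^ 2 * Real.exp (-b * ‖x‖ ^ 2)
      = ∫ y : Fin d → ℝ, (∑ i, y i ^ 2) * Real.exp (-b * ∑ i, y i ^ 2) := by
    rw [← (EuclideanSpace.volume_preserving_symm_measurableEquiv_toLp (Fin d)).integral_comp'
      (fun y : Fin d → ℝ => (∑ i, y i ^ 2) * Real.exp (-b * ∑ i, y i ^ 2))]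
    refine integral_congr_ae (Filter.Eventually.of_forall fun x => ?_)
    simp only [norm_sq_sum]
    rfl
  have hprod : ∀ y : Fin d → ℝ,
      (∑ i, y i ^ 2) * Real.exp (-b * ∑ i, y i ^ 2) = ∑ i, ∏ j, gfun d b i j (y j) := by
    intro y
    have hexp : Real.exp (-b * ∑ i, y i ^ 2) = ∏ j, Real.exp (-b * y j ^ 2) := by
      rw [← Real.exp_sum, Finset.mul_sum]
    rw [hexp, Finset.sum_mul]
    refine Finset.sum_congr rfl fun i _ => ?_
    rw [← Finset.mul_prod_erase Finset.univ (fun j => Real.exp (-b * y j ^ 2))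
        (Finset.mem_univ i),
      ← Finset.mul_prod_erase Finset.univ (fun j => gfun d b i j (y j)) (Finset.mem_univ i)]
    have h1 : gfun d b i i (y i) = y i ^ 2 * Real.exp (-b * y i ^ 2) := by simp [gfun]
    have h2 : ∏ j ∈ Finset.univ.erase i, gfun d b i j (y j)
        = ∏ j ∈ Finset.univ.erase i, Real.exp (-b * y j ^ 2) := by
      refine Finset.prod_congr rfl fun j hj => ?_
      simp [gfun, (Finset.mem_erase.mp hj).1]
    rw [h1, h2]; ring
  simp only [hprod] at htrans
  rw [htrans, integral_finset_sum (μ := volume) _ (fun i _ => Integrable.fintype_prod (fun j => hgint i j))]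
  have hterm : ∀ i : Fin d, (∫ y : Fin d → ℝ, ∏ j, gfun d b i j (y j))
      = (1 / (2 * b) * Real.sqrt (π / b)) * Real.sqrt (π / b) ^ (d - 1) := by
    intro i
    rw [MeasureTheory.integral_fintype_prod_volume_eq_prod (ι := Fin d) (gfun d b i),
      ← Finset.mul_prod_erase Finset.univ (fun j => ∫ t, gfun d b i j t) (Finset.mem_univ i)]
    have h1 : (∫ t, gfun d b i i t) = 1 / (2 * b) * Real.sqrt (π / b) := by
      rw [← moment2 hb]
      refine integral_congr_ae (Filter.Eventually.of_forall fun t => ?_)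
      simp [gfun]
    have h2 : ∏ j ∈ Finset.univ.erase i, (∫ t, gfun d b i j t)
        = Real.sqrt (π / b) ^ (d - 1) := by
      rw [Finset.prod_congr rfl (fun j hj => ?_), Finset.prod_const,
        Finset.card_erase_of_mem (Finset.mem_univ i), Finset.card_univ, Fintype.card_fin]
      show (∫ t, gfun d b i j t) = Real.sqrt (π / b)
      have : gfun d b i j = fun t => Real.exp (-b * t ^ 2) := by
        funext t; simp [gfun, (Finset.mem_erase.mp hj).1]
      rw [this, integral_gaussian]
    rw [h1, h2]
  simp only [hterm, Finset.sum_const, Finset.card_univ, Fintype.card_fin, nsmul_eq_mul]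
  have hpb : (0:ℝ) < π / b := by positivity
  rw [Real.sqrt_eq_rpow, ← Real.rpow_natCast ((π/b) ^ ((1:ℝ)/2)) (d-1),
    ← Real.rpow_mul hpb.le, mul_assoc, ← Real.rpow_add hpb]
  rw [Nat.cast_sub hd, Nat.cast_one]
  rw [show (1:ℝ)/2 + 1/2 * ((d:ℝ) - 1) = (d:ℝ)/2 by ring]
  ring

lemma gauss_int_d {d : ℕ} {b : ℝ} (hb : 0 < b) :
    ∫ x : EuclideanSpace ℝ (Fin d), Real.exp (-b * ‖x‖ ^ 2)
      = (π / b) ^ ((d : ℝ) / 2) := by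
  have h := GaussianFourier.integral_rexp_neg_mul_sq_norm (V := EuclideanSpace ℝ (Fin d)) hb
  rw [finrank_euclideanSpace_fin] at h
  exact h

lemma integrable_gauss_d {d : ℕ} {b : ℝ} (hb : 0 < b) :
    Integrable (fun x : EuclideanSpace ℝ (Fin d) => Real.exp (-b * ‖x‖ ^ 2)) := by
  have hP : Integrable (fun y : Fin d → ℝ => ∏ j, Real.exp (-b * y j ^ 2)) :=
    Integrable.fintype_prod (fun _ => integrable_exp_neg_mul_sq hb)
  have := ((EuclideanSpace.volume_preserving_symm_measurableEquiv_toLp (Fin d)).integrable_comp_emb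
    (MeasurableEquiv.measurableEmbedding _)).mpr hP
  refine this.congr (Filter.Eventually.of_forall fun x => ?_)
  show ∏ j, Real.exp (-b * ((MeasurableEquiv.toLp 2 (Fin d → ℝ)).symm x) j ^ 2) = _
  rw [← Real.exp_sum]
  congr 1
  rw [norm_sq_sum, Finset.mul_sum]
  rfl

lemma integrable_sq_gauss_d {d : ℕ} {b : ℝ} (hb : 0 < b) :
    Integrable (fun x : EuclideanSpace ℝ (Fin d) => ‖x‖ ^ 2 * Real.exp (-b * ‖x‖ ^ 2)) := by
  classical
  have hP : Integrable (fun y : Fin d → ℝ => ∑ i, ∏ j, gfun d b i j (y j)) :=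
    integrable_finset_sum _ (fun i _ => Integrable.fintype_prod (fun j => gfun_int hb i j))
  have := ((EuclideanSpace.volume_preserving_symm_measurableEquiv_toLp (Fin d)).integrable_comp_emb
    (MeasurableEquiv.measurableEmbedding _)).mpr hP
  refine this.congr (Filter.Eventually.of_forall fun x => ?_)
  show ∑ i, ∏ j, gfun d b i j (((MeasurableEquiv.toLp 2 (Fin d → ℝ)).symm x) j) = _
  have hx : ∀ j : Fin d, ((MeasurableEquiv.toLp 2 (Fin d → ℝ)).symm x) j = x j := fun j => rfl
  simp only [hx]
  have hexp : Real.exp (-b * ‖x‖ ^ 2) = ∏ j, Real.exp (-b * x j ^ 2) := by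
    rw [← Real.exp_sum]
    congr 1
    rw [norm_sq_sum, Finset.mul_sum]
  rw [hexp, norm_sq_sum, Finset.sum_mul]
  refine Finset.sum_congr rfl fun i _ => ?_
  rw [← Finset.mul_prod_erase Finset.univ (fun j => Real.exp (-b * x j ^ 2))
      (Finset.mem_univ i),
    ← Finset.mul_prod_erase Finset.univ (fun j => gfun d b i j (x j)) (Finset.mem_univ i)]
  have h1 : gfun d b i i (x i) = x i ^ 2 * Real.exp (-b * x i ^ 2) := by simp [gfun]
  have h2 : ∏ j ∈ Finset.univ.erase i, gfun d b i j (x j)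
      = ∏ j ∈ Finset.univ.erase i, Real.exp (-b * x j ^ 2) := by
    refine Finset.prod_congr rfl fun j hj => ?_
    simp [gfun, (Finset.mem_erase.mp hj).1]
  rw [h1, h2]; ring

theorem stmt_0 (d : ℕ) (hd : 1 ≤ d) (α η a : ℝ)
    (hα0 : 0 ≤ α) (hα1 : α ≤ 1) (hη : 0 < η) (ha : 0 ≤ a)
    (h : 2 * a * (η * d) ^ ((α + 1) / 2) ≤ 1) :
    (2 * Real.pi * η) ^ ((d : ℝ) / 2) / 2 ≤
      ∫ x : EuclideanSpace ℝ (Fin d),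
        Real.exp (-(1 / (2 * η)) * ‖x‖ ^ 2 - a * ‖x‖ ^ (α + 1)) := by
  have hb : (0:ℝ) < 1 / (2 * η) := by positivity
  set b : ℝ := 1 / (2 * η) with hb_def
  set p : ℝ := (α + 1) / 2 with hp_def
  set m : ℝ := η * d with hm_def
  have hd0 : (0:ℝ) < d := by exact_mod_cast hd
  have hm : 0 < m := by positivity
  have hp0 : 0 ≤ p := by rw [hp_def]; positivity
  have hp1 : p ≤ 1 := by rw [hp_def]; linarith
  have hpib : π / b = 2 * π * η := by
    rw [hb_def]; field_simp
  set G : ℝ := (2 * π * η) ^ ((d : ℝ) / 2) with hG_def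
  have hGpos : 0 < G := by rw [hG_def]; positivity
  -- known integrals
  have hG : ∫ x : EuclideanSpace ℝ (Fin d), Real.exp (-b * ‖x‖ ^ 2) = G := by
    rw [gauss_int_d hb, hpib]
  have hM : ∫ x : EuclideanSpace ℝ (Fin d), ‖x‖ ^ 2 * Real.exp (-b * ‖x‖ ^ 2)
      = m * G := by
    rw [momentd hd hb, hpib]
    rw [hm_def, hb_def]
    field_simp
    ring
    rw [hG_def]; ring_nf
  -- integrability
  have int_g := integrable_gauss_d (d := d) hb
  have int_M := integrable_sq_gauss_d (d := d) hb
  have cont_r : Continuous fun x : EuclideanSpace ℝ (Fin d) => ‖x‖ ^ (α + 1) :=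
    continuous_norm.rpow_const (fun x => Or.inr (by linarith))
  have cont_e : Continuous fun x : EuclideanSpace ℝ (Fin d) => Real.exp (-b * ‖x‖ ^ 2) :=
    Real.continuous_exp.comp (continuous_const.mul (continuous_norm.pow 2))
  have int_bound : Integrable (fun x : EuclideanSpace ℝ (Fin d) =>
      a * Real.exp (-b * ‖x‖ ^ 2) + a * (‖x‖ ^ 2 * Real.exp (-b * ‖x‖ ^ 2))) := by
    exact (int_g.const_mul a).add (int_M.const_mul a)
  have int_r : Integrable (fun x : EuclideanSpace ℝ (Fin d) =>
      Real.exp (-b * ‖x‖ ^ 2) * (a * ‖x‖ ^ (α + 1))) := by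
    refine Integrable.mono' int_bound
      ((cont_e.mul (continuous_const.mul cont_r)).aestronglyMeasurable)
      (Filter.Eventually.of_forall fun x => ?_)
    have hr : (0:ℝ) ≤ ‖x‖ := norm_nonneg x
    have hrr : ‖x‖ ^ (α + 1) ≤ 1 + ‖x‖ ^ 2 := by
      rcases le_or_gt ‖x‖ 1 with hle | hgt
      · have := Real.rpow_le_one hr hle (by linarith : 0 ≤ α + 1)
        nlinarith [sq_nonneg ‖x‖]
      · have h1 : ‖x‖ ^ (α + 1) ≤ ‖x‖ ^ (2:ℝ) :=
          Real.rpow_le_rpow_of_exponent_le hgt.le (by linarith)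
        rw [rpow_two_eq'] at h1
        nlinarith
    have hexp : (0:ℝ) < Real.exp (-b * ‖x‖ ^ 2) := Real.exp_pos _
    have habs : ‖Real.exp (-b * ‖x‖ ^ 2) * (a * ‖x‖ ^ (α + 1))‖
        = Real.exp (-b * ‖x‖ ^ 2) * (a * ‖x‖ ^ (α + 1)) := by
      rw [Real.norm_eq_abs, abs_of_nonneg]
      positivity
    rw [habs]
    have : Real.exp (-b * ‖x‖ ^ 2) * (a * ‖x‖ ^ (α + 1))
        ≤ Real.exp (-b * ‖x‖ ^ 2) * (a * (1 + ‖x‖ ^ 2)) := by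
      apply mul_le_mul_of_nonneg_left _ hexp.le
      exact mul_le_mul_of_nonneg_left hrr ha
    refine this.trans_eq ?_
    ring
  have int_f : Integrable (fun x : EuclideanSpace ℝ (Fin d) =>
      Real.exp (-b * ‖x‖ ^ 2 - a * ‖x‖ ^ (α + 1))) := by
    refine Integrable.mono' int_g
      ((Real.continuous_exp.comp ((continuous_const.mul (continuous_norm.pow 2)).sub
        (continuous_const.mul cont_r))).aestronglyMeasurable)
      (Filter.Eventually.of_forall fun x => ?_)
    rw [Real.norm_eq_abs, abs_of_nonneg (Real.exp_pos _).le]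
    apply Real.exp_le_exp.mpr
    have : (0:ℝ) ≤ a * ‖x‖ ^ (α + 1) := by positivity
    linarith
  -- moment bound: ∫ exp * (a * r^(α+1)) ≤ a * m^p * G
  have hmom : ∫ x : EuclideanSpace ℝ (Fin d),
      Real.exp (-b * ‖x‖ ^ 2) * (a * ‖x‖ ^ (α + 1)) ≤ a * m ^ p * G := by
    have hptwise : ∀ x : EuclideanSpace ℝ (Fin d),
        Real.exp (-b * ‖x‖ ^ 2) * (a * ‖x‖ ^ (α + 1))
        ≤ a * m ^ p * Real.exp (-b * ‖x‖ ^ 2)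
          + a * p * m ^ (p - 1) * (‖x‖ ^ 2 * Real.exp (-b * ‖x‖ ^ 2)
            - m * Real.exp (-b * ‖x‖ ^ 2)) := by
      intro x
      have hr : (0:ℝ) ≤ ‖x‖ := norm_nonneg x
      have hx2 : (0:ℝ) ≤ ‖x‖ ^ 2 := sq_nonneg _
      have htan := tangent_rpow hx2 hm hp0 hp1
      have hconv : ‖x‖ ^ (α + 1) = (‖x‖ ^ 2) ^ p := by
        rw [← rpow_two_eq', ← Real.rpow_mul hr]
        congr 1
        rw [hp_def]; ring
      have hexp : (0:ℝ) < Real.exp (-b * ‖x‖ ^ 2) := Real.exp_pos _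
      have := mul_le_mul_of_nonneg_left htan (mul_nonneg ha hexp.le)
      calc Real.exp (-b * ‖x‖ ^ 2) * (a * ‖x‖ ^ (α + 1))
          = (a * Real.exp (-b * ‖x‖ ^ 2)) * (‖x‖ ^ 2) ^ p := by rw [hconv]; ring
        _ ≤ (a * Real.exp (-b * ‖x‖ ^ 2)) * (m ^ p + p * m ^ (p - 1) * (‖x‖ ^ 2 - m)) := this
        _ = a * m ^ p * Real.exp (-b * ‖x‖ ^ 2)
            + a * p * m ^ (p - 1) * (‖x‖ ^ 2 * Real.exp (-b * ‖x‖ ^ 2)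
              - m * Real.exp (-b * ‖x‖ ^ 2)) := by ring
    have int_c1 : Integrable (fun x : EuclideanSpace ℝ (Fin d) =>
        a * m ^ p * Real.exp (-b * ‖x‖ ^ 2)) := by exact int_g.const_mul _
    have int_cg : Integrable (fun x : EuclideanSpace ℝ (Fin d) =>
        m * Real.exp (-b * ‖x‖ ^ 2)) := by exact int_g.const_mul m
    have int_diff : Integrable (fun x : EuclideanSpace ℝ (Fin d) =>
        ‖x‖ ^ 2 * Real.exp (-b * ‖x‖ ^ 2) - m * Real.exp (-b * ‖x‖ ^ 2)) := by
      exact int_M.sub int_cg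
    have int_c2 : Integrable (fun x : EuclideanSpace ℝ (Fin d) =>
        a * p * m ^ (p - 1) * (‖x‖ ^ 2 * Real.exp (-b * ‖x‖ ^ 2)
          - m * Real.exp (-b * ‖x‖ ^ 2))) := by exact int_diff.const_mul _
    have int_rhs : Integrable (fun x : EuclideanSpace ℝ (Fin d) =>
        a * m ^ p * Real.exp (-b * ‖x‖ ^ 2)
          + a * p * m ^ (p - 1) * (‖x‖ ^ 2 * Real.exp (-b * ‖x‖ ^ 2)
            - m * Real.exp (-b * ‖x‖ ^ 2))) := by exact int_c1.add int_c2
    have := integral_mono int_r int_rhs hptwise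
    refine this.trans ?_
    rw [integral_add int_c1 int_c2, integral_const_mul, integral_const_mul, hG,
      integral_sub int_M int_cg, hM, integral_const_mul, hG]
    ring_nf
    exact le_rfl
  -- pointwise lower bound and conclusion
  have hlow : ∀ x : EuclideanSpace ℝ (Fin d),
      Real.exp (-b * ‖x‖ ^ 2) - Real.exp (-b * ‖x‖ ^ 2) * (a * ‖x‖ ^ (α + 1))
        ≤ Real.exp (-b * ‖x‖ ^ 2 - a * ‖x‖ ^ (α + 1)) := by
    intro x
    rw [Real.exp_sub, div_eq_mul_inv, ← Real.exp_neg]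
    have h1 : 1 - a * ‖x‖ ^ (α + 1) ≤ Real.exp (-(a * ‖x‖ ^ (α + 1))) := by
      have := Real.add_one_le_exp (-(a * ‖x‖ ^ (α + 1)))
      linarith
    calc Real.exp (-b * ‖x‖ ^ 2) - Real.exp (-b * ‖x‖ ^ 2) * (a * ‖x‖ ^ (α + 1))
        = Real.exp (-b * ‖x‖ ^ 2) * (1 - a * ‖x‖ ^ (α + 1)) := by ring
      _ ≤ Real.exp (-b * ‖x‖ ^ 2) * Real.exp (-(a * ‖x‖ ^ (α + 1))) :=
          mul_le_mul_of_nonneg_left h1 (Real.exp_pos _).le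
  have key : G - a * m ^ p * G ≤ ∫ x : EuclideanSpace ℝ (Fin d),
      Real.exp (-b * ‖x‖ ^ 2 - a * ‖x‖ ^ (α + 1)) := by
    have int_sub : Integrable (fun x : EuclideanSpace ℝ (Fin d) =>
        Real.exp (-b * ‖x‖ ^ 2) - Real.exp (-b * ‖x‖ ^ 2) * (a * ‖x‖ ^ (α + 1))) := by
      exact int_g.sub int_r
    have hmono := integral_mono int_sub int_f (fun x => hlow x)
    rw [integral_sub int_g int_r, hG] at hmono
    linarith [hmom]
  have hhalf : a * m ^ p ≤ 1 / 2 := by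
    have : 2 * a * m ^ p ≤ 1 := by rw [hm_def, hp_def]; exact h
    linarith
  have : G / 2 ≤ G - a * m ^ p * G := by
    nlinarith [hGpos, hhalf]
  calc G / 2 ≤ G - a * m ^ p * G := this
    _ ≤ _ := key
end

section
/- For $0<s<1$ and $t>0$, the gamma function satisfies $t^{1-s} \le \frac{\Gamma(t+1)}{\Gamma(t+s)} \le (t+s)^{1-s}$. -/
theorem stmt_1 (s t : ℝ) (hs0 : 0 < s) (hs1 : s < 1) (ht : 0 < t) :
    t ^ (1 - s) ≤ Real.Gamma (t + 1) / Real.Gamma (t + s) ∧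
      Real.Gamma (t + 1) / Real.Gamma (t + s) ≤ (t + s) ^ (1 - s) := by
  have h1s : 0 < 1 - s := by linarith
  have hts : 0 < t + s := by linarith
  have hGt : 0 < Real.Gamma t := Real.Gamma_pos_of_pos ht
  have hGts : 0 < Real.Gamma (t + s) := Real.Gamma_pos_of_pos hts
  have hGt1 : 0 < Real.Gamma (t + 1) := Real.Gamma_pos_of_pos (by linarith)
  have hadd : Real.Gamma (t + 1) = t * Real.Gamma t := Real.Gamma_add_one ht.ne'
  constructor
  · -- lower bound
    have h := Real.Gamma_mul_add_mul_le_rpow_Gamma_mul_rpow_Gamma ht (by linarith : (0:ℝ) < t + 1)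
      h1s hs0 (by ring)
    have heq : (1 - s) * t + s * (t + 1) = t + s := by ring
    rw [heq] at h
    have hGteq : Real.Gamma t = Real.Gamma (t + 1) / t := by
      field_simp [hadd]
      rw [hadd]; ring
    rw [hGteq, Real.div_rpow hGt1.le ht.le] at h
    rw [le_div_iff₀ hGts]
    calc t ^ (1 - s) * Real.Gamma (t + s)
        ≤ t ^ (1 - s) * (Real.Gamma (t + 1) ^ (1 - s) / t ^ (1 - s) * Real.Gamma (t + 1) ^ s) :=
          by apply mul_le_mul_of_nonneg_left h (Real.rpow_nonneg ht.le _)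
      _ = Real.Gamma (t + 1) ^ (1 - s) * Real.Gamma (t + 1) ^ s := by
          field_simp
      _ = Real.Gamma (t + 1) := by
          rw [← Real.rpow_add hGt1]; norm_num
  · -- upper bound
    have h := Real.Gamma_mul_add_mul_le_rpow_Gamma_mul_rpow_Gamma hts
      (by linarith : (0:ℝ) < t + s + 1) hs0 h1s (by ring)
    have heq : s * (t + s) + (1 - s) * (t + s + 1) = t + 1 := by ring
    rw [heq] at h
    have hadd2 : Real.Gamma (t + s + 1) = (t + s) * Real.Gamma (t + s) :=
      Real.Gamma_add_one hts.ne'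
    rw [hadd2, Real.mul_rpow hts.le hGts.le] at h
    rw [div_le_iff₀ hGts]
    calc Real.Gamma (t + 1)
        ≤ Real.Gamma (t + s) ^ s * ((t + s) ^ (1 - s) * Real.Gamma (t + s) ^ (1 - s)) := h
      _ = (t + s) ^ (1 - s) * (Real.Gamma (t + s) ^ s * Real.Gamma (t + s) ^ (1 - s)) := by ring
      _ = (t + s) ^ (1 - s) * Real.Gamma (t + s) := by
          rw [← Real.rpow_add hGts]; norm_num
end

section
/- Let $\{t_j\}_{j\ge 1}$ be a sequence of nonnegative reals satisfying $t_{j+1} + \frac{1}{2\eta_\mu}\left(\frac{\alpha+1}{L_\alpha} t_{j+1}\right)^{2/(\alpha+1)} \le t_j$ for all $j\ge 1$, where $\eta_\mu>0$, $L_\alpha>0$, $\alpha\in[0,1]$. Let $\delta>0$, set $c = \frac{1}{2\eta_\mu}\left(\frac{\alpha+1}{L_\alpha}\right)^{2/(\alpha+1)} \delta^{(1-\alpha)/(\alpha+1)}$, and let $j_0 = 1 + \lceil \frac{1+c}{c}\log(t_1/\delta)\rceil$ (assuming $t_1>\delta$). Then $t_{j_0}\le\delta$. -/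
theorem stmt_11 (t : ℕ → ℝ) (ημ Lα α δ : ℝ)
    (hημ : 0 < ημ) (hLα : 0 < Lα) (hα0 : 0 ≤ α) (hα1 : α ≤ 1) (hδ : 0 < δ)
    (hnonneg : ∀ j, 0 ≤ t j)
    (hrec : ∀ j, 1 ≤ j →
      t (j + 1) + 1 / (2 * ημ) * ((α + 1) / Lα * t (j + 1)) ^ (2 / (α + 1)) ≤ t j)
    (ht1 : δ < t 1)
    (c : ℝ) (hc : c = 1 / (2 * ημ) * ((α + 1) / Lα) ^ (2 / (α + 1)) * δ ^ ((1 - α) / (α + 1))) :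
    t (1 + ⌈(1 + c) / c * Real.log (t 1 / δ)⌉₊) ≤ δ := by
  have hα1' : (0:ℝ) < α + 1 := by linarith
  have hb : (0:ℝ) < (α + 1) / Lα := by positivity
  have hA : (0:ℝ) < ((α + 1) / Lα) ^ (2 / (α + 1)) := Real.rpow_pos_of_pos hb _
  have hδβ : (0:ℝ) < δ ^ ((1 - α) / (α + 1)) := Real.rpow_pos_of_pos hδ _
  have hcpos : 0 < c := by rw [hc]; positivity
  have hβ : (0:ℝ) ≤ (1 - α) / (α + 1) := div_nonneg (by linarith) (by linarith)
  -- monotonicity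
  have hmono : ∀ j, 1 ≤ j → t (j + 1) ≤ t j := by
    intro j hj
    have h := hrec j hj
    have hnn : (0:ℝ) ≤ 1 / (2 * ημ) * ((α + 1) / Lα * t (j + 1)) ^ (2 / (α + 1)) := by
      have := hnonneg (j + 1)
      positivity
    linarith
  -- key geometric step
  have key : ∀ j, 1 ≤ j → δ < t (j + 1) → (1 + c) * t (j + 1) ≤ t j := by
    intro j hj hδt
    have htp : 0 < t (j + 1) := hδ.trans hδt
    have h1 : ((α + 1) / Lα * t (j + 1)) ^ (2 / (α + 1))
        = ((α + 1) / Lα) ^ (2 / (α + 1)) * (t (j + 1)) ^ (2 / (α + 1)) :=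
      Real.mul_rpow hb.le htp.le
    have hexp : 2 / (α + 1) = 1 + (1 - α) / (α + 1) := by field_simp; ring
    have h2 : (t (j + 1)) ^ (2 / (α + 1))
        = t (j + 1) * (t (j + 1)) ^ ((1 - α) / (α + 1)) := by
      rw [hexp, Real.rpow_add htp, Real.rpow_one]
    have h3 : δ ^ ((1 - α) / (α + 1)) ≤ (t (j + 1)) ^ ((1 - α) / (α + 1)) :=
      Real.rpow_le_rpow hδ.le hδt.le hβ
    have h := hrec j hj
    rw [h1, h2] at h
    have hK : (0:ℝ) < 1 / (2 * ημ) * ((α + 1) / Lα) ^ (2 / (α + 1)) := by positivity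
    have hstep : 1 / (2 * ημ) * ((α + 1) / Lα) ^ (2 / (α + 1)) * δ ^ ((1 - α) / (α + 1)) * t (j + 1)
        ≤ 1 / (2 * ημ) * (((α + 1) / Lα) ^ (2 / (α + 1)) * (t (j + 1) * (t (j + 1)) ^ ((1 - α) / (α + 1)))) := by
      nlinarith [mul_le_mul_of_nonneg_left h3 (mul_nonneg hK.le htp.le)]
    rw [hc]
    nlinarith
  -- main induction
  have main : ∀ k : ℕ, t (1 + k) ≤ δ ∨ (1 + c) ^ k * t (1 + k) ≤ t 1 := by
    intro k
    induction k with
    | zero => right; simp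
    | succ n ih =>
      by_cases h : t (1 + (n + 1)) ≤ δ
      · left; exact h
      · right
        push_neg at h
        have hidx : 1 + (n + 1) = (1 + n) + 1 := by omega
        rw [hidx] at h ⊢
        have hstep := key (1 + n) (by omega) h
        have ih' : (1 + c) ^ n * t (1 + n) ≤ t 1 := by
          rcases ih with hle | hle
          · exfalso
            have hm := hmono (1 + n) (by omega)
            linarith
          · exact hle
        have hpn : (0:ℝ) ≤ (1 + c) ^ n := by positivity
        have h5 : (1 + c) ^ n * ((1 + c) * t ((1 + n) + 1)) ≤ (1 + c) ^ n * t (1 + n) :=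
          mul_le_mul_of_nonneg_left hstep hpn
        calc (1 + c) ^ (n + 1) * t ((1 + n) + 1)
            = (1 + c) ^ n * ((1 + c) * t ((1 + n) + 1)) := by ring
          _ ≤ (1 + c) ^ n * t (1 + n) := h5
          _ ≤ t 1 := ih'
  set N := ⌈(1 + c) / c * Real.log (t 1 / δ)⌉₊ with hN
  by_contra hcon
  push_neg at hcon
  have hpow : (1 + c) ^ N * t (1 + N) ≤ t 1 := by
    rcases main N with hle | hle
    · exact absurd hle (not_le.mpr hcon)
    · exact hle
  have hpN : (0:ℝ) < (1 + c) ^ N := by positivity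
  have hupper : (1 + c) ^ N * δ < t 1 :=
    lt_of_lt_of_le (by exact (mul_lt_mul_iff_right₀ hpN).mpr hcon) hpow
  -- lower bound: t 1 ≤ (1+c)^N * δ
  have hL : 0 < Real.log (t 1 / δ) := Real.log_pos (by rw [lt_div_iff₀ hδ]; linarith)
  have hceil : (1 + c) / c * Real.log (t 1 / δ) ≤ (N : ℝ) := Nat.le_ceil _
  have hlogc : c / (1 + c) ≤ Real.log (1 + c) := by
    have h1c : (0:ℝ) < 1 + c := by linarith
    have h := Real.log_le_sub_one_of_pos (show (0:ℝ) < (1 + c)⁻¹ by positivity)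
    rw [Real.log_inv] at h
    have : (1 + c)⁻¹ = 1 - c / (1 + c) := by field_simp; ring
    linarith [this ▸ h]
  have h1c : (0:ℝ) < 1 + c := by linarith
  have hNlog : Real.log (t 1 / δ) ≤ (N : ℝ) * Real.log (1 + c) := by
    have hcc : (0:ℝ) < c / (1 + c) := by positivity
    have h6 : (1 + c) / c * Real.log (t 1 / δ) * (c / (1 + c)) ≤ (N : ℝ) * (c / (1 + c)) :=
      mul_le_mul_of_nonneg_right hceil hcc.le
    have h7 : (1 + c) / c * Real.log (t 1 / δ) * (c / (1 + c)) = Real.log (t 1 / δ) := by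
      field_simp
    have h8 : (N : ℝ) * (c / (1 + c)) ≤ (N : ℝ) * Real.log (1 + c) :=
      mul_le_mul_of_nonneg_left hlogc (Nat.cast_nonneg N)
    linarith
  have hlow : t 1 / δ ≤ (1 + c) ^ N := by
    have h9 : Real.log (t 1 / δ) ≤ Real.log ((1 + c) ^ N) := by
      rw [Real.log_pow]; exact hNlog
    have ht1δ : (0:ℝ) < t 1 / δ := div_pos (hδ.trans ht1) hδ
    exact (Real.log_le_log_iff ht1δ hpN).mp h9
  have : t 1 ≤ (1 + c) ^ N * δ := by
    rw [div_le_iff₀ hδ] at hlow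
    linarith
  linarith
end

section
/- Let $\nu$ and $\pi$ be probability measures on $\mathbb{R}^d$ with densities proportional to $\exp(-f)$ and $\exp(-g)$ respectively, where $g(x)=f(x)+\frac{\mu}{2}\|x-x^0\|^2$, $\mu>0$. Then the total variation distance satisfies $\|\pi-\nu\|_{TV} \le \frac{\mu}{2}\left(\int_{\mathbb{R}^d}\|x-x^0\|^4\,d\nu(x)\right)^{1/2}$. -/
open MeasureTheory Real

theorem stmt_17 (d : ℕ) (f : EuclideanSpace ℝ (Fin d) → ℝ)
    (μ : ℝ) (hμ : 0 < μ) (x0 : EuclideanSpace ℝ (Fin d))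
    (hmeas : Measurable f)
    (Zf Zg : ℝ)
    (hZf : Zf = ∫ x, Real.exp (-f x))
    (hZg : Zg = ∫ x, Real.exp (-(f x + μ / 2 * ‖x - x0‖ ^ 2)))
    (hZf0 : 0 < Zf) (hZg0 : 0 < Zg)
    (hintf : Integrable (fun x : EuclideanSpace ℝ (Fin d) => Real.exp (-f x)))
    (hmom : Integrable (fun x : EuclideanSpace ℝ (Fin d) =>
      ‖x - x0‖ ^ 4 * (Real.exp (-f x) / Zf))) :
    (1 / 2) * ∫ x, |Real.exp (-(f x + μ / 2 * ‖x - x0‖ ^ 2)) / Zg -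
        Real.exp (-f x) / Zf| ≤
      μ / 2 * Real.sqrt (∫ x, ‖x - x0‖ ^ 4 * (Real.exp (-f x) / Zf)) := by
  set g : EuclideanSpace ℝ (Fin d) → ℝ := fun x => f x + μ / 2 * ‖x - x0‖ ^ 2 with hgdef
  have hZg' : Zg = ∫ x, Real.exp (-(g x)) := hZg
  have hrmeas : Measurable fun x : EuclideanSpace ℝ (Fin d) => ‖x - x0‖ :=
    (continuous_id.sub continuous_const).norm.measurable
  have hgmeas : Measurable g := hmeas.add ((hrmeas.pow_const 2).const_mul _)
  have hh0 : ∀ x : EuclideanSpace ℝ (Fin d), 0 ≤ μ / 2 * ‖x - x0‖ ^ 2 := fun x =>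
    mul_nonneg (by positivity) (by positivity)
  have hfg' : ∀ x, f x ≤ g x := fun x => le_add_of_nonneg_right (hh0 x)
  have hfg : ∀ x, Real.exp (-(g x)) ≤ Real.exp (-f x) := fun x =>
    Real.exp_le_exp.2 (by have := hfg' x; linarith)
  have hintg : Integrable (fun x => Real.exp (-(g x))) := by
    refine hintf.mono' (hgmeas.neg.exp.aestronglyMeasurable) ?_
    filter_upwards with x
    rw [Real.norm_of_nonneg (Real.exp_nonneg _)]
    exact hfg x
  have hZgZf : Zg ≤ Zf := by
    rw [hZf, hZg']
    exact integral_mono hintg hintf hfg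
  set p : EuclideanSpace ℝ (Fin d) → ℝ := fun x => Real.exp (-f x) / Zf with hpdef
  set q : EuclideanSpace ℝ (Fin d) → ℝ := fun x => Real.exp (-(g x)) / Zg with hqdef
  set m : EuclideanSpace ℝ (Fin d) → ℝ := fun x => Real.exp (-(g x)) / Zf with hmdef
  have hp_int : Integrable p := hintf.div_const Zf
  have hq_int : Integrable q := hintg.div_const Zg
  have hm_int : Integrable m := hintg.div_const Zf
  have hip : ∫ x, p x = 1 := by
    simp only [hpdef, integral_div]
    rw [← hZf, div_self hZf0.ne']
  have hiq : ∫ x, q x = 1 := by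
    simp only [hqdef, integral_div]
    rw [← hZg', div_self hZg0.ne']
  have him : ∫ x, m x = Zg / Zf := by
    simp only [hmdef, integral_div]
    rw [← hZg']
  have hpw : ∀ x, |q x - p x| ≤ q x + p x - 2 * m x := by
    intro x
    have h1 : m x ≤ q x := by
      simp only [hmdef, hqdef]
      gcongr
    have h2 : m x ≤ p x := by
      simp only [hmdef, hpdef]
      gcongr
      exact hfg' x
    exact abs_sub_le_iff.2 ⟨by linarith, by linarith⟩
  have hIabs : Integrable (fun x => |q x - p x|) := (hq_int.sub hp_int).abs
  have step1 : ∫ x, |q x - p x| ≤ 2 - 2 * (Zg / Zf) := by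
    calc ∫ x, |q x - p x| ≤ ∫ x, (q x + p x - 2 * m x) :=
          integral_mono hIabs ((hq_int.add hp_int).sub (hm_int.const_mul 2)) hpw
      _ = (∫ x, (q x + p x)) - ∫ x, 2 * m x :=
          integral_sub (hq_int.add hp_int) (hm_int.const_mul 2)
      _ = ((∫ x, q x) + ∫ x, p x) - 2 * ∫ x, m x := by
          rw [integral_add hq_int hp_int, integral_const_mul]
      _ = 2 - 2 * (Zg / Zf) := by rw [hip, hiq, him]; ring
  have hint2 : Integrable (fun x : EuclideanSpace ℝ (Fin d) => ‖x - x0‖ ^ 2 * p x) := by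
    refine (hp_int.add hmom).mono' ((hrmeas.pow_const 2).mul
      ((hmeas.neg.exp.div_const Zf))).aestronglyMeasurable ?_
    filter_upwards with x
    have hp0 : 0 ≤ p x := by positivity
    rw [Real.norm_of_nonneg (by positivity)]
    have h14 : ‖x - x0‖ ^ 2 ≤ 1 + ‖x - x0‖ ^ 4 := by nlinarith [sq_nonneg (‖x - x0‖ ^ 2 - 1)]
    calc ‖x - x0‖ ^ 2 * p x ≤ (1 + ‖x - x0‖ ^ 4) * p x := by gcongr
      _ = p x + ‖x - x0‖ ^ 4 * p x := by ring
  have step2 : (Zf - Zg) / Zf ≤ μ / 2 * ∫ x, ‖x - x0‖ ^ 2 * p x := by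
    have hsub : (Zf - Zg) / Zf
        = ∫ x, (Real.exp (-f x) - Real.exp (-(g x))) / Zf := by
      rw [integral_div, integral_sub hintf hintg, ← hZf, ← hZg']
    rw [hsub, ← integral_const_mul]
    refine integral_mono ((hintf.sub hintg).div_const Zf)
      (hint2.const_mul (μ / 2)) ?_
    intro x
    have hkey : Real.exp (-f x) - Real.exp (-(g x))
        ≤ μ / 2 * ‖x - x0‖ ^ 2 * Real.exp (-f x) := by
      have hge : Real.exp (-(g x))
          = Real.exp (-f x) * Real.exp (-(μ / 2 * ‖x - x0‖ ^ 2)) := by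
        rw [← Real.exp_add]; congr 1; simp only [hgdef]; ring
      have hexp : 1 - μ / 2 * ‖x - x0‖ ^ 2 ≤ Real.exp (-(μ / 2 * ‖x - x0‖ ^ 2)) := by
        have := Real.add_one_le_exp (-(μ / 2 * ‖x - x0‖ ^ 2)); linarith
      nlinarith [Real.exp_nonneg (-f x)]
    show (Real.exp (-f x) - Real.exp (-(g x))) / Zf ≤ μ / 2 * (‖x - x0‖ ^ 2 * p x)
    calc (Real.exp (-f x) - Real.exp (-(g x))) / Zf
        ≤ (μ / 2 * ‖x - x0‖ ^ 2 * Real.exp (-f x)) / Zf := by gcongr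
      _ = μ / 2 * (‖x - x0‖ ^ 2 * p x) := by simp only [hpdef]; ring
  have hI4nonneg : 0 ≤ ∫ x, ‖x - x0‖ ^ 4 * p x :=
    integral_nonneg fun x => by positivity
  have hp0 : ∀ x, 0 ≤ p x := fun x => by positivity
  have step3 : ∫ x, ‖x - x0‖ ^ 2 * p x ≤ Real.sqrt (∫ x, ‖x - x0‖ ^ 4 * p x) := by
    have hpq : (2 : ℝ).HolderConjugate 2 := Real.holderConjugate_iff.mpr ⟨by norm_num, by norm_num⟩
    have hameas : AEStronglyMeasurable
        (fun x : EuclideanSpace ℝ (Fin d) => ‖x - x0‖ ^ 2 * Real.sqrt (p x)) volume :=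
      ((hrmeas.pow_const 2).mul ((hmeas.neg.exp.div_const Zf).sqrt)).aestronglyMeasurable
    have hbmeas : AEStronglyMeasurable
        (fun x : EuclideanSpace ℝ (Fin d) => Real.sqrt (p x)) volume :=
      ((hmeas.neg.exp.div_const Zf).sqrt).aestronglyMeasurable
    have hML : MemLp (fun x : EuclideanSpace ℝ (Fin d) => ‖x - x0‖ ^ 2 * Real.sqrt (p x))
        (ENNReal.ofReal 2) volume := by
      rw [show ENNReal.ofReal 2 = 2 by norm_num]
      rw [memLp_two_iff_integrable_sq hameas]
      have he : (fun x : EuclideanSpace ℝ (Fin d) => (‖x - x0‖ ^ 2 * Real.sqrt (p x)) ^ 2)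
          = fun x => ‖x - x0‖ ^ 4 * p x := by
        funext x
        rw [mul_pow, Real.sq_sqrt (hp0 x)]
        ring
      rw [he]
      exact hmom
    have hMR : MemLp (fun x : EuclideanSpace ℝ (Fin d) => Real.sqrt (p x))
        (ENNReal.ofReal 2) volume := by
      rw [show ENNReal.ofReal 2 = 2 by norm_num]
      rw [memLp_two_iff_integrable_sq hbmeas]
      have he : (fun x : EuclideanSpace ℝ (Fin d) => Real.sqrt (p x) ^ 2) = p := by
        funext x; exact Real.sq_sqrt (hp0 x)
      rw [he]
      exact hp_int
    have hCS := integral_mul_le_Lp_mul_Lq_of_nonneg hpq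
      (Filter.Eventually.of_forall fun x => by positivity)
      (Filter.Eventually.of_forall fun x => Real.sqrt_nonneg _) hML hMR
    have hL : ∫ x, (‖x - x0‖ ^ 2 * Real.sqrt (p x)) * Real.sqrt (p x)
        = ∫ x, ‖x - x0‖ ^ 2 * p x := by
      congr 1; funext x
      rw [mul_assoc, Real.mul_self_sqrt (hp0 x)]
    have hA : ∫ x, (‖x - x0‖ ^ 2 * Real.sqrt (p x)) ^ (2 : ℝ)
        = ∫ x, ‖x - x0‖ ^ 4 * p x := by
      congr 1; funext x
      rw [Real.rpow_two, mul_pow, Real.sq_sqrt (hp0 x)]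
      ring
    have hB : ∫ x, Real.sqrt (p x) ^ (2 : ℝ) = 1 := by
      have he : (fun x : EuclideanSpace ℝ (Fin d) => Real.sqrt (p x) ^ (2 : ℝ))
          = fun x => p x := by
        funext x; rw [Real.rpow_two, Real.sq_sqrt (hp0 x)]
      rw [he]; exact hip
    rw [hL, hA, hB] at hCS
    calc ∫ x, ‖x - x0‖ ^ 2 * p x
        ≤ (∫ x, ‖x - x0‖ ^ 4 * p x) ^ ((1:ℝ) / 2) * (1:ℝ) ^ ((1:ℝ) / 2) := hCS
      _ = Real.sqrt (∫ x, ‖x - x0‖ ^ 4 * p x) := by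
          rw [Real.one_rpow, mul_one, ← Real.sqrt_eq_rpow]
  have h12 : (1 / 2 : ℝ) * (∫ x, |q x - p x|) ≤ (Zf - Zg) / Zf := by
    have he : (Zf - Zg) / Zf = 1 - Zg / Zf := by field_simp
    rw [he]; linarith [step1]
  have final : (1 / 2 : ℝ) * (∫ x, |q x - p x|)
      ≤ μ / 2 * Real.sqrt (∫ x, ‖x - x0‖ ^ 4 * p x) :=
    calc (1 / 2 : ℝ) * (∫ x, |q x - p x|) ≤ (Zf - Zg) / Zf := h12
      _ ≤ μ / 2 * ∫ x, ‖x - x0‖ ^ 2 * p x := step2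
      _ ≤ μ / 2 * Real.sqrt (∫ x, ‖x - x0‖ ^ 4 * p x) := by
          have := step3
          nlinarith [Real.sqrt_nonneg (∫ x, ‖x - x0‖ ^ 4 * p x)]
  exact final
end
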